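/- arXiv:2509.03471 — 3 statements merged into one kernel-verified Lean document; each statement's English description precedes it below -/
import Mathlib

section
/- Let φ^k, φ^{k+1}, r^{k+1/2}, r^{k-1/2}, S be real numbers satisfying (r^{k+1/2} + r^{k-1/2})/2 = φ^k(1 - φ^k) - S. Then ((1/2)r^{k+1/2} + S/2)·(1 - (φ^{k+1}+φ^k))·(φ^{k+1} - φ^k) = (1/2)(r^{k+1/2}+S)(φ^{k+1} - (φ^{k+1})^2 - S) - (1/2)(r^{k-1/2}+S)(φ^k - (φ^k)^2 - S) - (1/4)((r^{k+1/2})^2 - (r^{k-1/2})^2). -/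
theorem stmt_3 (φk φk1 rp rm S : ℝ)
    (h : (rp + rm)/2 = φk*(1 - φk) - S) :
    ((1/2)*rp + S/2) * (1 - (φk1 + φk)) * (φk1 - φk) =
      (1/2)*(rp + S)*(φk1 - φk1^2 - S) - (1/2)*(rm + S)*(φk - φk^2 - S)
        - (1/4)*(rp^2 - rm^2) := by
  -- With g x := x - x^2 - S the left side is (rp + S)/2 * (g φk1 - g φk), and the two sides
  -- differ by (rp - rm)/2 * ((rp + rm)/2 - g φk).
  linear_combination (rp - rm) / 2 * h
end

section
/- Fix 0 < α < 1, j ≥ 1, and a time grid 0 = t_0 < ... < t_n. For the L1+ kernel b^{(1-α,n)}_j = (1/(τ_n τ_{n-j})) ∫_{t_{n-1}}^{t_n} ∫_{t_{n-j-1}}^{t_{n-j}} (t-s)^{-α}/Γ(1-α) ds dt (valid since t_{n-j} ≤ t_{n-1}), the limit as α → 1⁻ of b^{(1-α,n)}_j equals 0. -/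
/-!
Both integrations are explicit: for `α < 1`,
`∫_a^b ∫_c^d (x - s)^(-α) / Γ(1 - α) ds dx
  = ((b - c)^(2-α) - (a - c)^(2-α) - (b - d)^(2-α) + (a - d)^(2-α)) / Γ(3 - α)`,
using `Γ(3 - α) = (2 - α)(1 - α)Γ(1 - α)`. As `α → 1` the numerator tends to
`(b - c) - (a - c) - (b - d) + (a - d) = 0` and `Γ(3 - α) → Γ(2) = 1`.

For exponents `r > -1` the antiderivative formula `integral_rpow` holds on every interval
(on negative bases `Real.rpow` is `|x| ^ r * cos (r π)`), so the closed form is valid for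
arbitrary `a, b, c, d`.
-/

open intervalIntegral Filter Topology Real

theorem integral_sub_rpow {r : ℝ} (hr : -1 < r) (x c d : ℝ) :
    ∫ s in c..d, (x - s) ^ r = ((x - c) ^ (r + 1) - (x - d) ^ (r + 1)) / (r + 1) := by
  rw [integral_comp_sub_left (· ^ r), integral_rpow (Or.inl hr)]

theorem integral_rpow_sub {r : ℝ} (hr : -1 < r) (e a b : ℝ) :
    ∫ x in a..b, (x - e) ^ r = ((b - e) ^ (r + 1) - (a - e) ^ (r + 1)) / (r + 1) := by
  rw [integral_comp_sub_right (· ^ r), integral_rpow (Or.inl hr)]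

theorem continuous_rpow_sub {r : ℝ} (hr : 0 < r) (e : ℝ) :
    Continuous fun x : ℝ => (x - e) ^ r :=
  (continuous_id.sub continuous_const).rpow_const fun _ => Or.inr hr.le

theorem Real.Gamma_add_two {s : ℝ} (hs : s ≠ 0) (hs₁ : s + 1 ≠ 0) :
    Gamma (s + 2) = (s + 1) * (s * Gamma s) := by
  rw [show s + 2 = s + 1 + 1 by ring, Gamma_add_one hs₁, Gamma_add_one hs]

theorem integral_integral_sub_rpow_neg_div_Gamma {α : ℝ} (hα : α < 1) (a b c d : ℝ) :
    ∫ x in a..b, ∫ s in c..d, (x - s) ^ (-α) / Gamma (1 - α) =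
      ((b - c) ^ (2 - α) - (a - c) ^ (2 - α)
        - ((b - d) ^ (2 - α) - (a - d) ^ (2 - α))) / Gamma (3 - α) := by
  have hintegrable (e : ℝ) : IntervalIntegrable (fun x => (x - e) ^ (1 - α)) MeasureTheory.volume a b :=
    (continuous_rpow_sub (by linarith) e).intervalIntegrable a b
  have hΓ : Gamma (3 - α) = (2 - α) * ((1 - α) * Gamma (1 - α)) := by
    rw [show 3 - α = (1 - α) + 2 by ring, Gamma_add_two (by linarith) (by linarith)]
    ring_nf
  simp_rw [integral_div, integral_sub_rpow (by linarith : -1 < -α), neg_add_eq_sub, integral_div]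
  rw [integral_sub (hintegrable c) (hintegrable d), integral_rpow_sub (by linarith) c,
    integral_rpow_sub (by linarith) d, show 1 - α + 1 = 2 - α by ring, hΓ,
    div_sub_div_same, div_div, div_div]

theorem tendsto_integral_integral_sub_rpow_neg_div_Gamma (a b c d : ℝ) :
    Tendsto (fun α : ℝ => ∫ x in a..b, ∫ s in c..d, (x - s) ^ (-α) / Gamma (1 - α))
      (𝓝[<] 1) (𝓝 0) := by
  have hpow (p : ℝ) : Tendsto (fun α : ℝ => p ^ (2 - α)) (𝓝 1) (𝓝 p) := by
    simpa using tendsto_const_nhds.rpow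
      ((by fun_prop : Continuous fun α : ℝ => 2 - α).tendsto' 1 1 (by norm_num)) (Or.inr one_pos)
  have hΓ : Tendsto (fun α : ℝ => Gamma (3 - α)) (𝓝 1) (𝓝 1) := by
    have h2 : ContinuousAt Gamma 2 := (differentiableAt_Gamma fun m => by
      have := m.cast_nonneg (α := ℝ); linarith).continuousAt
    simpa [Gamma_two, Function.comp_def] using
      h2.tendsto.comp ((by fun_prop : Continuous fun α : ℝ => 3 - α).tendsto' 1 2 (by norm_num))
  have hclosed := (((hpow (b - c)).sub (hpow (a - c))).sub
    ((hpow (b - d)).sub (hpow (a - d)))).div hΓ one_ne_zero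
  rw [show (b - c - (a - c) - (b - d - (a - d))) / 1 = 0 by ring] at hclosed
  refine (hclosed.mono_left nhdsWithin_le_nhds).congr' ?_
  filter_upwards [self_mem_nhdsWithin] with α hα
  exact (integral_integral_sub_rpow_neg_div_Gamma hα a b c d).symm

theorem stmt_7_general (n j : ℕ) (t : ℕ → ℝ) :
    Tendsto (fun α : ℝ =>
        (1 / ((t n - t (n-1)) * (t (n-j) - t (n-j-1)))) *
          ∫ x in (t (n-1))..(t n), ∫ s in (t (n-j-1))..(t (n-j)),
            (x - s)^(-α) / Real.Gamma (1 - α))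
      (nhdsWithin 1 (Set.Iio 1)) (nhds 0) := by
  simpa using (tendsto_integral_integral_sub_rpow_neg_div_Gamma
    (t (n-1)) (t n) (t (n-j-1)) (t (n-j))).const_mul (1 / ((t n - t (n-1)) * (t (n-j) - t (n-j-1))))

theorem stmt_7 (n j : ℕ) (hj : 1 ≤ j) (hjn : j + 1 ≤ n) (t : ℕ → ℝ)
    (ht0 : t 0 = 0) (hmono : ∀ i, i < n → t i < t (i+1)) :
    Tendsto (fun α : ℝ =>
        (1 / ((t n - t (n-1)) * (t (n-j) - t (n-j-1)))) *
          ∫ x in (t (n-1))..(t n), ∫ s in (t (n-j-1))..(t (n-j)),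
            (x - s)^(-α) / Real.Gamma (1 - α))
      (nhdsWithin 1 (Set.Iio 1)) (nhds 0) :=
  stmt_7_general n j t
end

section
/- Let H be a real inner product space, n ≥ 1, and suppose real coefficients b_0, ..., b_{n-1} ≥ 0 are nonincreasing (b_{j} ≥ b_{j+1} for all j). Then for any u^1, ..., u^n ∈ H, ⟨∑_{k=1}^n b_{n-k} u^k, u^n⟩ = (1/2)∑_{k=1}^{n-1}(b_{n-k-1} - b_{n-k})‖∑_{j=k+1}^n u^j‖² + (1/2) b_{n-1} ‖∑_{j=1}^n u^j‖² + (1/2) b_0 ‖u^n‖² - (1/2)∑_{k=1}^{n-1}(b_{n-k-1} - b_{n-k})‖∑_{j=k+1}^{n-1} u^j‖² - (1/2) b_{n-1} ‖∑_{j=1}^{n-1} u^j‖². -/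
/-!
Abel summation rewrites the convolution sum `V = ∑ₖ b_{n-k} uᵏ` as a combination of the tail sums
`Sₖ = ∑_{j>k} uʲ` with weights `b_{n-k-1} - b_{n-k}` (and `b_{n-1}` for the full sum), and the same
kernel applied to `u¹, …, uⁿ⁻¹` gives `W = V - b₀ uⁿ` in terms of the truncated tails `Tₖ = Sₖ - uⁿ`.
Since `‖Sₖ‖² - ‖Tₖ‖² = ⟪Sₖ + Tₖ, uⁿ⟫`, the right-hand side equals `½⟪V + W, uⁿ⟫ + ½ b₀ ‖uⁿ‖² = ⟪V, uⁿ⟫`.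
-/

open RealInnerProductSpace Finset

section SummationByParts

variable {R M : Type*} [Ring R] [AddCommGroup M] [Module R M]

theorem sum_Icc_smul_eq_smul_sum_add_sum_sub_smul_tail (f : ℕ → R) (v : ℕ → M) (N : ℕ) :
    ∑ k ∈ Icc 1 N, f k • v k =
      f 1 • ∑ j ∈ Icc 1 N, v j + ∑ k ∈ Icc 1 N, (f (k + 1) - f k) • ∑ j ∈ Icc (k + 1) N, v j := by
  induction N with
  | zero => simp
  | succ N ih =>
    have htail : ∀ k ∈ Icc 1 N, ∑ j ∈ Icc (k + 1) (N + 1), v j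
        = ∑ j ∈ Icc (k + 1) N, v j + v (N + 1) := fun k hk =>
      sum_Icc_succ_top (by simp only [mem_Icc] at hk; omega) v
    have htelescope : ∑ k ∈ Icc 1 N, (f (k + 1) - f k) = f (N + 1) - f 1 := by
      rw [← Ico_add_one_right_eq_Icc, sum_Ico_sub f (by omega)]
    rw [sum_Icc_succ_top (by omega), sum_Icc_succ_top (by omega), sum_Icc_succ_top (by omega),
      sum_congr rfl fun k hk => congrArg _ (htail k hk), ih,
      Icc_eq_empty_of_lt (Nat.lt_succ_self (N + 1))]
    simp only [smul_add, sum_add_distrib, ← sum_smul, htelescope, sum_empty, smul_zero]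
    rw [sub_smul]
    abel

theorem sum_Icc_succ_smul_eq_smul_sum_add_sum_sub_smul_tail (f : ℕ → R) (v : ℕ → M) (N : ℕ) :
    ∑ k ∈ Icc 1 (N + 1), f k • v k =
      f 1 • ∑ j ∈ Icc 1 (N + 1), v j
        + ∑ k ∈ Icc 1 N, (f (k + 1) - f k) • ∑ j ∈ Icc (k + 1) (N + 1), v j := by
  rw [sum_Icc_smul_eq_smul_sum_add_sum_sub_smul_tail, sum_Icc_succ_top (by omega)
      (fun k => (f (k + 1) - f k) • ∑ j ∈ Icc (k + 1) (N + 1), v j),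
    Icc_eq_empty_of_lt (Nat.lt_succ_self (N + 1)), sum_empty, smul_zero, add_zero]

end SummationByParts

section InnerProduct

variable {H : Type*} [NormedAddCommGroup H] [InnerProductSpace ℝ H]

theorem norm_add_sq_sub_norm_sq_real (x y : H) :
    ‖x + y‖ ^ 2 - ‖x‖ ^ 2 = ⟪x + y, y⟫ + ⟪x, y⟫ := by
  rw [norm_add_sq_real, inner_add_left, real_inner_self_eq_norm_sq, real_inner_comm]
  ring

theorem sum_mul_norm_sq_sub_sum_mul_norm_sq_of_eq_add {ι : Type*} (s : Finset ι) (c : ι → ℝ)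
    {x z : ι → H} {y : H} (hxz : ∀ k ∈ s, z k = x k + y) :
    ∑ k ∈ s, c k * ‖z k‖ ^ 2 - ∑ k ∈ s, c k * ‖x k‖ ^ 2 =
      ⟪∑ k ∈ s, c k • z k, y⟫ + ⟪∑ k ∈ s, c k • x k, y⟫ := by
  rw [← sum_sub_distrib, sum_inner, sum_inner, ← sum_add_distrib]
  refine sum_congr rfl fun k hk => ?_
  rw [hxz k hk, ← mul_sub, norm_add_sq_sub_norm_sq_real, real_inner_smul_left,
    real_inner_smul_left, mul_add]

end InnerProduct

theorem stmt_9_general {H : Type*} [NormedAddCommGroup H] [InnerProductSpace ℝ H]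
    (n : ℕ) (hn : 1 ≤ n) (b : ℕ → ℝ) (u : ℕ → H) :
    ⟪∑ k ∈ Finset.Icc 1 n, b (n-k) • u k, u n⟫ =
      (1/2) * ∑ k ∈ Finset.Icc 1 (n-1),
          (b (n-k-1) - b (n-k)) * ‖∑ j ∈ Finset.Icc (k+1) n, u j‖^2
      + (1/2) * b (n-1) * ‖∑ j ∈ Finset.Icc 1 n, u j‖^2
      + (1/2) * b 0 * ‖u n‖^2
      - (1/2) * ∑ k ∈ Finset.Icc 1 (n-1),
          (b (n-k-1) - b (n-k)) * ‖∑ j ∈ Finset.Icc (k+1) (n-1), u j‖^2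
      - (1/2) * b (n-1) * ‖∑ j ∈ Finset.Icc 1 (n-1), u j‖^2 := by
  obtain ⟨m, rfl⟩ : ∃ m, n = m + 1 := ⟨n - 1, by omega⟩
  simp only [Nat.add_sub_cancel, Nat.sub_sub]
  have htail : ∀ k ≤ m, ∑ j ∈ Icc (k + 1) (m + 1), u j = ∑ j ∈ Icc (k + 1) m, u j + u (m + 1) :=
    fun k hk => sum_Icc_succ_top (by omega) u
  have hV := sum_Icc_succ_smul_eq_smul_sum_add_sum_sub_smul_tail (fun k => b (m + 1 - k)) u m
  have hW := sum_Icc_smul_eq_smul_sum_add_sum_sub_smul_tail (fun k => b (m + 1 - k)) u m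
  have hVW : ∑ k ∈ Icc 1 (m + 1), b (m + 1 - k) • u k
      = ∑ k ∈ Icc 1 m, b (m + 1 - k) • u k + b 0 • u (m + 1) := by
    rw [sum_Icc_succ_top (by omega), Nat.sub_self]
  have hS := sum_mul_norm_sq_sub_sum_mul_norm_sq_of_eq_add (Icc 1 m)
    (fun k => b (m + 1 - (k + 1)) - b (m + 1 - k)) fun k hk => htail k (mem_Icc.1 hk).2
  have hS₀ := norm_add_sq_sub_norm_sq_real (∑ j ∈ Icc 1 m, u j) (u (m + 1))
  rw [← htail 0 (Nat.zero_le m), zero_add] at hS₀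
  replace hV := congrArg (⟪·, u (m + 1)⟫) hV
  replace hW := congrArg (⟪·, u (m + 1)⟫) hW
  replace hVW := congrArg (⟪·, u (m + 1)⟫) hVW
  simp only [inner_add_left, real_inner_smul_left, real_inner_self_eq_norm_sq,
    Nat.add_sub_cancel] at hV hW hVW
  linear_combination (1/2) * hV + (1/2) * hW + (1/2) * hVW - (1/2) * hS - (1/2) * b m * hS₀

theorem stmt_9 {H : Type*} [NormedAddCommGroup H] [InnerProductSpace ℝ H]
    (n : ℕ) (hn : 1 ≤ n) (b : ℕ → ℝ) (hb : ∀ j, 0 ≤ b j)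
    (hmono : ∀ j, b (j+1) ≤ b j) (u : ℕ → H) :
    ⟪∑ k ∈ Finset.Icc 1 n, b (n-k) • u k, u n⟫ =
      (1/2) * ∑ k ∈ Finset.Icc 1 (n-1),
          (b (n-k-1) - b (n-k)) * ‖∑ j ∈ Finset.Icc (k+1) n, u j‖^2
      + (1/2) * b (n-1) * ‖∑ j ∈ Finset.Icc 1 n, u j‖^2
      + (1/2) * b 0 * ‖u n‖^2
      - (1/2) * ∑ k ∈ Finset.Icc 1 (n-1),
          (b (n-k-1) - b (n-k)) * ‖∑ j ∈ Finset.Icc (k+1) (n-1), u j‖^2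
      - (1/2) * b (n-1) * ‖∑ j ∈ Finset.Icc 1 (n-1), u j‖^2 :=
  stmt_9_general n hn b u
end
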